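/- For positive integers n, k, parameters z_1, ..., z_k, x, q with all denominators nonzero: ∑_{n ≥ i_1 ≥ ... ≥ i_k ≥ 1} (1 - x^{i_k}) ∏_{j=1}^k q^{i_j}/((1-q^{i_j})(1 - z_j q^{i_j})) = ∑_{i=1}^n [n choose i]_q (-1)^{i-1} q^{binom(i+1,2) - ni} (q;q)_{i-1}/(z_1 q;q)_i · ∑_{i ≥ i_1 ≥ ... ≥ i_k ≥ 1} [(x;q)_{i_k} (z_k q;q)_{i_k}/(q;q)_{i_k}] · ∏_{j=1}^{k-1} [(z_j q;q)_{i_j} / ((1-q^{i_j})(z_{j+1} q;q)_{i_j})] · ∏_{j=1}^k q^{i_j}/(1 - z_j q^{i_j}). -/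

import Mathlib

/-!
Write `d(n,i)` (`qKernel`) for the coefficient on the right without its factor `1/(z₁q;q)_i`, and
`w_z(i) = q^i/((1-q^i)(1-zq^i))` (`chainWeight`) for the weight of one level of the chain sum on
the left. The q-binomial theorem gives `1 - x^n = ∑_{t=1}^n d(n,t) (x;q)_t/(q;q)_{t-1}`, so the
innermost factor `1 - x^{i_k}` has the shape `∑_{t ≤ i} d(i,t) g(t)`. The key identity is
`∑_{i=t}^n w_z(i) d(i,t) = w_z(t) (zq;q)_t ∑_{i=t}^n d(n,i)/(zq;q)_i`: the increment in `n` of the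
right-hand side telescopes, by the contiguity relations of the Gaussian binomials. Exchanging the
order of summation with it, `∑_{i ≤ n} w_z(i) ∑_{t ≤ i} d(i,t) g(t)` becomes
`∑_{i ≤ n} d(n,i)/(zq;q)_i ∑_{t ≤ i} w_z(t) (zq;q)_t g(t)`, which has the same shape again; peeling
off the levels of the chain one at a time yields the nested sum on the right.
-/

noncomputable def qPoch (q a : ℝ) (n : ℕ) : ℝ := ∏ j ∈ Finset.range n, (1 - a * q ^ j)

noncomputable def qBinom (q : ℝ) (n r : ℕ) : ℝ :=
  if r ≤ n then qPoch q q n / (qPoch q q r * qPoch q q (n - r)) else 0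

/-- Left-hand side multiple sum of Proposition 4.1:
`lhs41 q x zs m j top` is the sum over chains `top ≥ i_j ≥ ⋯ ≥ i_{j+m-1} ≥ 1` of
`(1 - x^{i_last}) ∏ q^{i_l}/((1-q^{i_l})(1 - z_l q^{i_l}))`. -/
noncomputable def lhs41 (q x : ℝ) (zs : ℕ → ℝ) : ℕ → ℕ → ℕ → ℝ
  | 0, _, top => 1 - x ^ top
  | m + 1, j, top =>
      ∑ i ∈ Finset.Icc 1 top,
        q ^ i / ((1 - q ^ i) * (1 - zs j * q ^ i)) * lhs41 q x zs m (j + 1) i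

/-- Inner multiple sum on the right-hand side of Proposition 4.1, with `m` remaining levels,
the next labelled `j`. -/
noncomputable def rhs41 (q x : ℝ) (zs : ℕ → ℝ) : ℕ → ℕ → ℕ → ℝ
  | 0, _, _ => 1
  | 1, j, top =>
      ∑ i ∈ Finset.Icc 1 top,
        q ^ i / (1 - zs j * q ^ i) *
          (qPoch q x i * qPoch q (zs j * q) i / qPoch q q i)
  | m + 2, j, top =>
      ∑ i ∈ Finset.Icc 1 top,
        q ^ i / (1 - zs j * q ^ i) *
          (qPoch q (zs j * q) i / ((1 - q ^ i) * qPoch q (zs (j + 1) * q) i)) *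
          rhs41 q x zs (m + 1) (j + 1) i

open Finset

section qPoch

variable {q : ℝ}

@[simp]
lemma qPoch_zero (a : ℝ) : qPoch q a 0 = 1 := prod_range_zero _

lemma qPoch_succ (a : ℝ) (n : ℕ) : qPoch q a (n + 1) = qPoch q a n * (1 - a * q ^ n) :=
  prod_range_succ _ _

lemma qPoch_mul_self_succ (z : ℝ) (n : ℕ) :
    qPoch q (z * q) (n + 1) = qPoch q (z * q) n * (1 - z * q ^ (n + 1)) := by
  rw [qPoch_succ, mul_assoc, ← pow_succ']

lemma qPoch_self_succ (n : ℕ) : qPoch q q (n + 1) = qPoch q q n * (1 - q ^ (n + 1)) := by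
  simpa using qPoch_mul_self_succ (q := q) 1 n

lemma qPoch_mul_self_ne_zero {z : ℝ} (hz : ∀ j, 1 ≤ j → 1 - z * q ^ j ≠ 0) (n : ℕ) :
    qPoch q (z * q) n ≠ 0 := by
  induction n with
  | zero => simp
  | succ n ih => rw [qPoch_mul_self_succ]; exact mul_ne_zero ih (hz _ n.succ_pos)

lemma qPoch_self_ne_zero (hq1 : ∀ j, 1 ≤ j → 1 - q ^ j ≠ 0) (n : ℕ) :
    qPoch q q n ≠ 0 := by
  simpa using qPoch_mul_self_ne_zero (z := 1) (by simpa using hq1) n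

end qPoch

section qBinom

variable {q : ℝ} (hq1 : ∀ j, 1 ≤ j → 1 - q ^ j ≠ 0)

lemma qBinom_of_lt {n r : ℕ} (h : n < r) : qBinom q n r = 0 := if_neg (by omega)

lemma qBinom_add_left (a r : ℕ) :
    qBinom q (a + r) r = qPoch q q (a + r) / (qPoch q q r * qPoch q q a) := by
  rw [qBinom, if_pos (by omega), Nat.add_sub_cancel]

include hq1

lemma qBinom_zero_right (n : ℕ) : qBinom q n 0 = 1 := by
  simpa [qPoch_self_ne_zero hq1 n] using qBinom_add_left (q := q) n 0

lemma qBinom_self (n : ℕ) : qBinom q n n = 1 := by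
  simpa [qPoch_self_ne_zero hq1 n] using qBinom_add_left (q := q) 0 n

lemma qBinom_succ_left_mul (n r : ℕ) :
    qBinom q (n + 1) r * (1 - q ^ (n + 1 - r)) = qBinom q n r * (1 - q ^ (n + 1)) := by
  rcases lt_trichotomy r (n + 1) with h | rfl | h
  · obtain ⟨a, rfl⟩ : ∃ a, n = a + r := ⟨n - r, by omega⟩
    rw [show a + r + 1 = (a + 1) + r by ring, qBinom_add_left, qBinom_add_left,
      show a + 1 + r - r = a + 1 by omega, show a + 1 + r = (a + r) + 1 by ring,
      qPoch_self_succ, qPoch_self_succ]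
    have := qPoch_self_ne_zero hq1
    have := hq1 (a + 1) (by omega)
    field_simp
  · simp [qBinom_of_lt (Nat.lt_succ_self n)]
  · simp [qBinom_of_lt h, qBinom_of_lt (show n < r by omega)]

lemma qBinom_succ_right_mul (n r : ℕ) :
    qBinom q n (r + 1) * (1 - q ^ (r + 1)) = qBinom q n r * (1 - q ^ (n - r)) := by
  rcases lt_or_ge r n with h | h
  · obtain ⟨a, rfl⟩ : ∃ a, n = a + (r + 1) := ⟨n - (r + 1), by omega⟩
    rw [qBinom_add_left, show a + (r + 1) = (a + 1) + r by ring, qBinom_add_left,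
      show a + 1 + r - r = a + 1 by omega, qPoch_self_succ, qPoch_self_succ]
    have := qPoch_self_ne_zero hq1
    have := hq1 (a + 1) (by omega)
    have := hq1 (r + 1) (by omega)
    field_simp
  · simp [qBinom_of_lt (show n < r + 1 by omega), show n - r = 0 by omega]

lemma qBinom_succ_succ (n r : ℕ) :
    qBinom q (n + 1) (r + 1) = qBinom q n (r + 1) + q ^ (n - r) * qBinom q n r := by
  rcases lt_trichotomy r n with h | rfl | h
  · obtain ⟨a, rfl⟩ : ∃ a, n = a + 1 + r := ⟨n - r - 1, by omega⟩
    rw [show a + 1 + r + 1 = (a + 1) + (r + 1) by ring, qBinom_add_left,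
      show a + 1 + r = a + (r + 1) by ring, qBinom_add_left,
      show a + (r + 1) = (a + 1) + r by ring, qBinom_add_left,
      show a + 1 + r - r = a + 1 by omega, show a + 1 + (r + 1) = (a + 1 + r) + 1 by ring,
      qPoch_self_succ, qPoch_self_succ, qPoch_self_succ]
    have := qPoch_self_ne_zero hq1
    have := hq1 (a + 1) (by omega)
    have := hq1 (r + 1) (by omega)
    field_simp
    ring
  · simp [qBinom_of_lt (Nat.lt_succ_self r), qBinom_self hq1]
  · simp [qBinom_of_lt (show n + 1 < r + 1 by omega), qBinom_of_lt h,
      qBinom_of_lt (show n < r + 1 by omega)]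

end qBinom

noncomputable def qNewtonCoeff (q : ℝ) (n t : ℕ) : ℝ :=
  qBinom q n t * (-1) ^ t * q ^ (t * (t + 1) / 2) / q ^ (n * t)

lemma triangle_succ (t : ℕ) : (t + 1) * (t + 1 + 1) / 2 = t * (t + 1) / 2 + (t + 1) := by
  rw [show (t + 1) * (t + 1 + 1) = t * (t + 1) + 2 * (t + 1) by ring,
    Nat.add_mul_div_left _ _ two_pos]

section qNewtonCoeff

variable {q : ℝ} (hq : q ≠ 0) (hq1 : ∀ j, 1 ≤ j → 1 - q ^ j ≠ 0)

lemma qNewtonCoeff_of_lt {n t : ℕ} (h : n < t) : qNewtonCoeff q n t = 0 := by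
  simp [qNewtonCoeff, qBinom_of_lt h]

include hq1 in
lemma qNewtonCoeff_zero_right (n : ℕ) : qNewtonCoeff q n 0 = 1 := by
  simp [qNewtonCoeff, qBinom_zero_right hq1]

include hq hq1

lemma qNewtonCoeff_succ_succ (n t : ℕ) :
    q ^ (t + 1) * qNewtonCoeff q (n + 1) (t + 1) =
      qNewtonCoeff q n (t + 1) - q * qNewtonCoeff q n t := by
  rcases le_or_gt t n with h | h
  · obtain ⟨a, rfl⟩ : ∃ a, n = t + a := ⟨n - t, by omega⟩
    rw [qNewtonCoeff, qNewtonCoeff, qNewtonCoeff, qBinom_succ_succ hq1, triangle_succ,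
      show t + a - t = a by omega, show (t + a + 1) * (t + 1) = (t + a) * (t + 1) + (t + 1) by ring,
      show (t + a) * (t + 1) = (t + a) * t + (t + a) by ring, pow_add, pow_add, pow_add, pow_add,
      pow_succ (-1 : ℝ)]
    field_simp
    ring
  · simp [qNewtonCoeff_of_lt h, qNewtonCoeff_of_lt (show n < t + 1 by omega),
      qNewtonCoeff_of_lt (show n + 1 < t + 1 by omega)]

lemma qNewtonCoeff_succ_left_mul (n t : ℕ) :
    q ^ t * (1 - q ^ (n + 1 - t)) * qNewtonCoeff q (n + 1) t =
      (1 - q ^ (n + 1)) * qNewtonCoeff q n t := by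
  have h := qBinom_succ_left_mul hq1 n t
  rw [qNewtonCoeff, qNewtonCoeff, show (n + 1) * t = n * t + t by ring, pow_add]
  field_simp
  linear_combination h

lemma qNewtonCoeff_succ_right_mul (n t : ℕ) :
    q ^ n * (1 - q ^ (t + 1)) * qNewtonCoeff q n (t + 1) =
      -(q ^ (t + 1) * (1 - q ^ (n - t)) * qNewtonCoeff q n t) := by
  have h := qBinom_succ_right_mul hq1 n t
  rw [qNewtonCoeff, qNewtonCoeff, triangle_succ, show n * (t + 1) = n * t + n by ring, pow_add,
    pow_add, pow_succ (-1 : ℝ)]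
  field_simp
  linear_combination -(q ^ n * q ^ (n * t) * q ^ (t * (t + 1) / 2) * q ^ (t + 1)) * h

end qNewtonCoeff

section expansion

variable {q : ℝ} (hq : q ≠ 0) (hq1 : ∀ j, 1 ≤ j → 1 - q ^ j ≠ 0)
include hq hq1

theorem pow_eq_sum_qNewtonCoeff_mul_qPoch (x : ℝ) (n : ℕ) :
    x ^ n = ∑ t ∈ range (n + 1), qNewtonCoeff q n t * qPoch q x t := by
  induction n with
  | zero => simp [qNewtonCoeff_zero_right hq1]
  | succ n ih =>
    set b : ℕ → ℝ := fun t => qNewtonCoeff q n t / q ^ t with hb_def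
    have hx (t : ℕ) : q ^ t * (x * qPoch q x t) = qPoch q x t - qPoch q x (t + 1) := by
      rw [qPoch_succ]; ring
    have hb (t : ℕ) : qNewtonCoeff q (n + 1) (t + 1) = b (t + 1) - b t := by
      have := qNewtonCoeff_succ_succ hq hq1 n t
      simp only [hb_def]
      field_simp
      linear_combination q ^ t * this
    have hb_top : b (n + 1) = 0 := by simp [b, qNewtonCoeff_of_lt (Nat.lt_succ_self n)]
    calc x ^ (n + 1)
        = ∑ t ∈ range (n + 1), b t * (qPoch q x t - qPoch q x (t + 1)) := by
          rw [pow_succ', ih, mul_sum]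
          refine sum_congr rfl fun t _ => ?_
          rw [← hx, hb_def]
          field_simp
      _ = ∑ t ∈ range (n + 1 + 1), qNewtonCoeff q (n + 1) t * qPoch q x t := by
          have hshift : ∑ t ∈ range (n + 1), b t * qPoch q x t =
              ∑ t ∈ range (n + 1), b (t + 1) * qPoch q x (t + 1) + b 0 * qPoch q x 0 := by
            rw [sum_range_succ (fun t => b (t + 1) * qPoch q x (t + 1)), hb_top, zero_mul, add_zero,
              sum_range_succ']
          simp only [mul_sub, sum_sub_distrib, hshift, sum_range_succ' _ (n + 1), hb, sub_mul]
          simp only [hb_def, qNewtonCoeff_zero_right hq1, pow_zero, div_one, qPoch_zero, mul_one]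
          ring

end expansion

/-- For `i ≥ 1`, `qKernel q n i = [n,i]_q (-1)^(i-1) q^(binom(i+1,2) - n i) (q;q)_{i-1}`. -/
noncomputable def qKernel (q : ℝ) (n i : ℕ) : ℝ := -(qNewtonCoeff q n i * qPoch q q (i - 1))

lemma qKernel_of_lt {q : ℝ} {n i : ℕ} (h : n < i) : qKernel q n i = 0 := by
  simp [qKernel, qNewtonCoeff_of_lt h]

section qKernel

variable {q : ℝ} (hq : q ≠ 0) (hq1 : ∀ j, 1 ≤ j → 1 - q ^ j ≠ 0)
include hq hq1

lemma one_sub_pow_eq_sum_qKernel (x : ℝ) (n : ℕ) :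
    1 - x ^ n = ∑ t ∈ Icc 1 n, qKernel q n t * (qPoch q x t / qPoch q q (t - 1)) := by
  rw [pow_eq_sum_qNewtonCoeff_mul_qPoch hq hq1, range_eq_Ico,
    sum_eq_sum_Ico_succ_bot (by omega : 0 < n + 1), zero_add, Ico_add_one_right_eq_Icc,
    qNewtonCoeff_zero_right hq1, qPoch_zero, one_mul, sub_add_cancel_left, ← sum_neg_distrib]
  refine sum_congr rfl fun t _ => ?_
  have := qPoch_self_ne_zero hq1 (t - 1)
  rw [qKernel]
  field_simp

lemma qKernel_succ_left_sub {n i : ℕ} (hi : 1 ≤ i) (hin : i ≤ n + 1) :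
    (1 - q ^ (n + 1)) * (qKernel q (n + 1) i - qKernel q n i) =
      -(qNewtonCoeff q (n + 1) i * qPoch q q i) := by
  have key := qNewtonCoeff_succ_left_mul hq hq1 n i
  obtain ⟨s, rfl⟩ : ∃ s, i = s + 1 := ⟨i - 1, by omega⟩
  obtain ⟨a, rfl⟩ : ∃ a, n = s + a := ⟨n - s, by omega⟩
  rw [show s + a + 1 - (s + 1) = a by omega] at key
  rw [qKernel, qKernel, Nat.add_sub_cancel, qPoch_self_succ]
  linear_combination (-qPoch q q s) * key

end qKernel

lemma sum_Icc_sum_Icc_comm {M : Type*} [AddCommMonoid M] (f : ℕ → ℕ → M) (n : ℕ) :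
    ∑ i ∈ Icc 1 n, ∑ t ∈ Icc 1 i, f i t = ∑ t ∈ Icc 1 n, ∑ i ∈ Icc t n, f i t := by
  refine sum_comm' fun i t => ?_
  simp only [mem_Icc]
  omega

noncomputable def chainWeight (q z : ℝ) (i : ℕ) : ℝ := q ^ i / ((1 - q ^ i) * (1 - z * q ^ i))

section chainWeight

variable {q z : ℝ} (hq : q ≠ 0) (hq1 : ∀ j, 1 ≤ j → 1 - q ^ j ≠ 0)
  (hz : ∀ j, 1 ≤ j → 1 - z * q ^ j ≠ 0)
include hq hq1 hz

lemma sum_qNewtonCoeff_mul_qPoch_div {n t : ℕ} (htn : t ≤ n) :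
    (1 - z * q ^ n) * ∑ i ∈ Icc t n, qNewtonCoeff q n i * qPoch q q i / qPoch q (z * q) i =
      q ^ n / q ^ t * qNewtonCoeff q n t * qPoch q q t * (1 - z * q ^ t) / qPoch q (z * q) t := by
  set T : ℕ → ℝ := fun i =>
    q ^ n / q ^ i * qNewtonCoeff q n i * qPoch q q i * (1 - z * q ^ i) / qPoch q (z * q) i
    with hT
  have hstep (i : ℕ) (hi : i ≤ n) :
      (1 - z * q ^ n) * (qNewtonCoeff q n i * qPoch q q i / qPoch q (z * q) i) =
        T i - T (i + 1) := by
    have key := qNewtonCoeff_succ_right_mul hq hq1 n i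
    have := qPoch_mul_self_ne_zero hz i
    have := hz (i + 1) (by omega)
    obtain ⟨a, rfl⟩ : ∃ a, n = i + a := ⟨n - i, by omega⟩
    rw [Nat.add_sub_cancel_left] at key
    simp only [hT, qPoch_self_succ, qPoch_mul_self_succ]
    field_simp
    linear_combination q ^ i * qPoch q q i * key
  have hT_top : T (n + 1) = 0 := by simp [hT, qNewtonCoeff_of_lt (Nat.lt_succ_self n)]
  rw [mul_sum, sum_congr rfl fun i hi => hstep i (mem_Icc.mp hi).2, ← neg_neg (∑ i ∈ _, _),
    ← sum_neg_distrib]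
  simp only [neg_sub]
  rw [sum_Icc_sub htn, hT_top, zero_sub, neg_neg]

lemma sum_qKernel_div_qPoch_succ_sub {t n : ℕ} (ht : 1 ≤ t) (htn : t ≤ n + 1) :
    (1 - q ^ (n + 1)) * (1 - z * q ^ (n + 1)) *
        (∑ i ∈ Icc t (n + 1), qKernel q (n + 1) i / qPoch q (z * q) i -
          ∑ i ∈ Icc t n, qKernel q n i / qPoch q (z * q) i) =
      -(q ^ (n + 1) / q ^ t * qNewtonCoeff q (n + 1) t * qPoch q q t * (1 - z * q ^ t) /
        qPoch q (z * q) t) := by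
  have hext : ∑ i ∈ Icc t n, qKernel q n i / qPoch q (z * q) i =
      ∑ i ∈ Icc t (n + 1), qKernel q n i / qPoch q (z * q) i := by
    rw [sum_Icc_succ_top htn, qKernel_of_lt n.lt_succ_self, zero_div, add_zero]
  rw [hext, ← sum_sub_distrib, ← sum_qNewtonCoeff_mul_qPoch_div hq hq1 hz htn, mul_sum, mul_sum,
    ← sum_neg_distrib]
  refine sum_congr rfl fun i hi => ?_
  have := qKernel_succ_left_sub hq hq1 (n := n) (ht.trans (mem_Icc.mp hi).1) (mem_Icc.mp hi).2
  rw [← sub_div]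
  field_simp [qPoch_mul_self_ne_zero hz i]
  linear_combination (1 - z * q ^ (n + 1)) * this

lemma sum_chainWeight_mul_qKernel {t n : ℕ} (ht : 1 ≤ t) (htn : t ≤ n) :
    ∑ i ∈ Icc t n, chainWeight q z i * qKernel q i t =
      chainWeight q z t * qPoch q (z * q) t *
        ∑ i ∈ Icc t n, qKernel q n i / qPoch q (z * q) i := by
  have hP := qPoch_mul_self_ne_zero hz t
  induction n, htn using Nat.le_induction with
  | base =>
    simp only [Icc_self, sum_singleton]
    field_simp
  | succ n htn ih =>
    have hdiff := sum_qKernel_div_qPoch_succ_sub hq hq1 hz ht (htn.trans n.le_succ)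
    rw [sum_Icc_succ_top (by omega), ih]
    generalize ∑ i ∈ Icc t (n + 1), qKernel q (n + 1) i / qPoch q (z * q) i = S₁ at hdiff ⊢
    generalize ∑ i ∈ Icc t n, qKernel q n i / qPoch q (z * q) i = S₀ at hdiff ⊢
    have := hq1 (n + 1) le_add_self
    have := hz (n + 1) le_add_self
    rw [mul_comm, ← eq_div_iff (by positivity), sub_eq_iff_eq_add'] at hdiff
    obtain ⟨s, rfl⟩ : ∃ s, t = s + 1 := ⟨t - 1, by omega⟩
    have := hq1 (s + 1) le_add_self
    have := hz (s + 1) le_add_self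
    rw [hdiff, mul_add, add_right_inj, chainWeight, chainWeight, qKernel, Nat.add_sub_cancel,
      qPoch_self_succ]
    field_simp

theorem sum_chainWeight_mul_sum_qKernel (g : ℕ → ℝ) (n : ℕ) :
    ∑ i ∈ Icc 1 n, chainWeight q z i * ∑ t ∈ Icc 1 i, qKernel q i t * g t =
      ∑ i ∈ Icc 1 n, qKernel q n i *
        ((∑ t ∈ Icc 1 i, chainWeight q z t * qPoch q (z * q) t * g t) / qPoch q (z * q) i) := by
  calc _ = ∑ t ∈ Icc 1 n, (∑ i ∈ Icc t n, chainWeight q z i * qKernel q i t) * g t := by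
        simp_rw [mul_sum, sum_mul, mul_assoc]
        exact sum_Icc_sum_Icc_comm _ n
    _ = ∑ t ∈ Icc 1 n, ∑ i ∈ Icc t n,
          qKernel q n i / qPoch q (z * q) i * (chainWeight q z t * qPoch q (z * q) t * g t) := by
        refine sum_congr rfl fun t ht => ?_
        rw [sum_chainWeight_mul_qKernel hq hq1 hz (mem_Icc.mp ht).1 (mem_Icc.mp ht).2,
          mul_right_comm, mul_sum]
        refine sum_congr rfl fun i _ => ?_
        ring
    _ = _ := by
        rw [← sum_Icc_sum_Icc_comm]
        simp_rw [div_eq_mul_inv, sum_mul, mul_sum]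
        refine sum_congr rfl fun i _ => sum_congr rfl fun t _ => ?_
        ring

end chainWeight

theorem lhs41_succ_eq_sum_qKernel {q x : ℝ} {zs : ℕ → ℝ} (hq : q ≠ 0)
    (hq1 : ∀ j, 1 ≤ j → 1 - q ^ j ≠ 0) (hzs : ∀ l j, 1 ≤ j → 1 - zs l * q ^ j ≠ 0)
    (m : ℕ) :
    ∀ j n, lhs41 q x zs (m + 1) j n =
      ∑ i ∈ Icc 1 n, qKernel q n i * (rhs41 q x zs (m + 1) j i / qPoch q (zs j * q) i) := by
  induction m with
  | zero =>
    intro j n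
    calc lhs41 q x zs 1 j n
        = ∑ i ∈ Icc 1 n, chainWeight q (zs j) i *
            ∑ t ∈ Icc 1 i, qKernel q i t * (qPoch q x t / qPoch q q (t - 1)) := by
          simp only [lhs41, chainWeight, one_sub_pow_eq_sum_qKernel hq hq1]
      _ = _ := by
          rw [sum_chainWeight_mul_sum_qKernel hq hq1 (hzs j)]
          refine sum_congr rfl fun i _ => ?_
          simp only [rhs41]
          congr 2
          refine sum_congr rfl fun t ht => ?_
          obtain ⟨s, rfl⟩ : ∃ s, t = s + 1 := ⟨t - 1, by grind⟩
          simp only [chainWeight, Nat.add_sub_cancel, qPoch_self_succ, div_eq_mul_inv, mul_inv]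
          ring
  | succ m ih =>
    intro j n
    calc lhs41 q x zs (m + 2) j n
        = ∑ i ∈ Icc 1 n, chainWeight q (zs j) i * ∑ t ∈ Icc 1 i,
            qKernel q i t * (rhs41 q x zs (m + 1) (j + 1) t / qPoch q (zs (j + 1) * q) t) := by
          rw [lhs41.eq_2]
          simp only [chainWeight, ih]
      _ = _ := by
          rw [sum_chainWeight_mul_sum_qKernel hq hq1 (hzs j)]
          refine sum_congr rfl fun i _ => ?_
          simp only [rhs41]
          congr 2
          refine sum_congr rfl fun t _ => ?_
          simp only [chainWeight, div_eq_mul_inv, mul_inv]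
          ring

theorem prop41_general (q x : ℝ) (zs : ℕ → ℝ) (n k : ℕ) (hk : 0 < k) (hq : q ≠ 0)
    (hden1 : ∀ j : ℕ, 1 ≤ j → 1 - q ^ j ≠ 0)
    (hden2 : ∀ l j : ℕ, 1 ≤ j → 1 - zs l * q ^ j ≠ 0) :
    lhs41 q x zs k 1 n =
      ∑ i ∈ Finset.Icc 1 n,
        qBinom q n i * (-1) ^ (i - 1) * q ^ (((i * (i + 1) / 2 : ℕ) : ℤ) - (n : ℤ) * i) *
          (qPoch q q (i - 1) / qPoch q (zs 1 * q) i) * rhs41 q x zs k 1 i := by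
  obtain ⟨m, rfl⟩ : ∃ m, k = m + 1 := ⟨k - 1, by omega⟩
  rw [lhs41_succ_eq_sum_qKernel hq hden1 hden2]
  refine sum_congr rfl fun i hi => ?_
  obtain ⟨s, rfl⟩ : ∃ s, i = s + 1 := ⟨i - 1, by grind⟩
  rw [qKernel, qNewtonCoeff, zpow_sub₀ hq, zpow_natCast, ← Nat.cast_mul, zpow_natCast,
    Nat.add_sub_cancel, pow_succ (-1 : ℝ)]
  ring

/-- Proposition 4.1. -/
theorem prop41 (q x : ℝ) (zs : ℕ → ℝ) (n k : ℕ) (hn : 0 < n) (hk : 0 < k) (hq : q ≠ 0)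
    (hden1 : ∀ j : ℕ, 1 ≤ j → 1 - q ^ j ≠ 0)
    (hden2 : ∀ l j : ℕ, 1 ≤ j → 1 - zs l * q ^ j ≠ 0) :
    lhs41 q x zs k 1 n =
      ∑ i ∈ Finset.Icc 1 n,
        qBinom q n i * (-1) ^ (i - 1) * q ^ (((i * (i + 1) / 2 : ℕ) : ℤ) - (n : ℤ) * i) *
          (qPoch q q (i - 1) / qPoch q (zs 1 * q) i) * rhs41 q x zs k 1 i :=
  prop41_general q x zs n k hk hq hden1 hden2
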